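/- arXiv:0711.3142 — 5 statements merged into one kernel-verified Lean document; each statement's English description precedes it below -/
import Mathlib

section
/- Let G be a finite group, s ∈ G, and ρ : G^s → ℂˣ a homomorphism. Suppose that for every element σ in the intersection of the conjugacy class of s with the centralizer G^s, writing σ = g s g⁻¹, one has ρ(g⁻¹ s g · σ) = 1 (equivalently ρ(γ_{1,t} γ_{t,1}) = 1 where g_1 = 1). Then for every commuting pair σ_k = g_k s g_k⁻¹, σ_l = g_l s g_l⁻¹ of conjugates of s, one has ρ(γ_{k,l} γ_{l,k}) = 1, where γ_{k,l} = g_l⁻¹ σ_k g_l and γ_{l,k} = g_k⁻¹ σ_l g_k. -/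
/-!
Conjugating by `g_k⁻¹` sends `σ_k` to `s` and `σ_l` to `g s g⁻¹` with `g = g_k⁻¹ g_l`; since `σ_k`
and `σ_l` commute, `g s g⁻¹` lies in `G^s`, and `γ_{k,l} γ_{l,k}` is literally the element
`(g⁻¹ s g)(g s g⁻¹)` on which the hypothesis is made.
-/

namespace Subgroup

variable {G : Type*} [Group G]

theorem mem_centralizer_singleton_iff_commute {g s : G} :
    g ∈ centralizer ({s} : Set G) ↔ Commute s g := by
  simp only [mem_centralizer_iff, Set.mem_singleton_iff, forall_eq]
  rfl

theorem conj_mem_centralizer_of_commute_conj {s gk gl : G}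
    (h : Commute (gk * s * gk⁻¹) (gl * s * gl⁻¹)) :
    (gk⁻¹ * gl) * s * (gk⁻¹ * gl)⁻¹ ∈ centralizer ({s} : Set G) := by
  rw [mem_centralizer_singleton_iff_commute]
  convert h.conj gk⁻¹ using 1 <;> group

end Subgroup

theorem stmt2_general (G : Type*) [Group G] (s : G)
    (ρ : Subgroup.centralizer ({s} : Set G) →* ℂˣ)
    (hyp : ∀ g : G, (g * s * g⁻¹) ∈ Subgroup.centralizer ({s} : Set G) →
      ∀ hγ : (g⁻¹ * s * g) * (g * s * g⁻¹) ∈ Subgroup.centralizer ({s} : Set G),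
        ρ ⟨(g⁻¹ * s * g) * (g * s * g⁻¹), hγ⟩ = 1) :
    ∀ gk gl : G,
      (gk * s * gk⁻¹) * (gl * s * gl⁻¹) = (gl * s * gl⁻¹) * (gk * s * gk⁻¹) →
      ∀ hγ : (gl⁻¹ * (gk * s * gk⁻¹) * gl) * (gk⁻¹ * (gl * s * gl⁻¹) * gk) ∈
          Subgroup.centralizer ({s} : Set G),
        ρ ⟨(gl⁻¹ * (gk * s * gk⁻¹) * gl) * (gk⁻¹ * (gl * s * gl⁻¹) * gk), hγ⟩ = 1 := by
  intro gk gl hcomm hγ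
  set g := gk⁻¹ * gl
  have hprod : (gl⁻¹ * (gk * s * gk⁻¹) * gl) * (gk⁻¹ * (gl * s * gl⁻¹) * gk)
      = (g⁻¹ * s * g) * (g * s * g⁻¹) := by
    simp only [g]
    group
  have hσ : g * s * g⁻¹ ∈ Subgroup.centralizer ({s} : Set G) :=
    Subgroup.conj_mem_centralizer_of_commute_conj hcomm
  calc ρ ⟨_, hγ⟩ = ρ ⟨(g⁻¹ * s * g) * (g * s * g⁻¹), hprod ▸ hγ⟩ :=
        congrArg ρ (Subtype.ext hprod)
    _ = 1 := hyp g hσ _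

/-- If `ρ(γ_{1,t} γ_{t,1}) = 1` for every `σ_t` in `𝒪_s ∩ G^s` (with `g_1 = 1`),
then `ρ(γ_{k,l} γ_{l,k}) = 1` for every commuting pair of conjugates of `s`. -/
theorem stmt2 (G : Type*) [Group G] [Fintype G] (s : G)
    (ρ : Subgroup.centralizer ({s} : Set G) →* ℂˣ)
    (hyp : ∀ g : G, (g * s * g⁻¹) ∈ Subgroup.centralizer ({s} : Set G) →
      ∀ hγ : (g⁻¹ * s * g) * (g * s * g⁻¹) ∈ Subgroup.centralizer ({s} : Set G),
        ρ ⟨(g⁻¹ * s * g) * (g * s * g⁻¹), hγ⟩ = 1) :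
    ∀ gk gl : G,
      (gk * s * gk⁻¹) * (gl * s * gl⁻¹) = (gl * s * gl⁻¹) * (gk * s * gk⁻¹) →
      ∀ hγ : (gl⁻¹ * (gk * s * gk⁻¹) * gl) * (gk⁻¹ * (gl * s * gl⁻¹) * gk) ∈
          Subgroup.centralizer ({s} : Set G),
        ρ ⟨(gl⁻¹ * (gk * s * gk⁻¹) * gl) * (gk⁻¹ * (gl * s * gl⁻¹) * gk), hγ⟩ = 1 :=
  stmt2_general G s ρ hyp
end

section
/- In the Mathieu group M₁₁ (the subgroup of S₁₁ generated by (1 2 3 4 5 6 7 8 9 10 11) and (3 7 11 8)(4 10 5 6)), the element s = (1 3 11 6 7 10 4 5)(8 9) has order 8, its centralizer in M₁₁ is the cyclic group generated by s, and s³ is conjugate to s in M₁₁. -/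
/-!
The permutation `s` has cycle type `(8, 2, 1)`, so its centralizer in `S₁₁` has order
`8 · 2 = 16`: it is `⟨s⟩ × ⟨(8 9)⟩`, in which `⟨s⟩` has index `2`. Since `M₁₁` is generated by
even permutations, it misses the transposition `(8 9)`, so the centralizer of `s` in `M₁₁` is a
proper subgroup of `C_{S₁₁}(s)` containing `⟨s⟩`, hence equal to `⟨s⟩`. Membership of `s` in
`M₁₁` and the conjugacy `s ~ s³` are witnessed by explicit words in the generators.
-/

/-- The Mathieu group `M₁₁ ≤ S₁₁` (points `1,…,11` encoded as `0,…,10`). -/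
def M11 : Subgroup (Equiv.Perm (Fin 11)) :=
  Subgroup.closure {c[0, 1, 2, 3, 4, 5, 6, 7, 8, 9, 10], c[2, 6, 10, 7] * c[3, 9, 4, 5]}

namespace Subgroup

variable {G : Type*} [Group G]

theorem card_mul_relIndex {A K : Subgroup G} (h : A ≤ K) :
    Nat.card A * A.relIndex K = Nat.card K := by
  simpa only [relIndex_bot_left] using relIndex_mul_relIndex _ _ _ bot_le h

theorem eq_of_le_of_relIndex_eq_prime {A H K : Subgroup G} {p : ℕ} (hp : p.Prime)
    (hAH : A ≤ H) (hHK : H ≤ K) (hKH : ¬K ≤ H) (hAK : A.relIndex K = p) : H = A := by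
  have h : A.relIndex H * H.relIndex K = p := hAK ▸ relIndex_mul_relIndex _ _ _ hAH hHK
  rcases Nat.prime_mul_iff.mp (h ▸ hp) with ⟨-, hHK1⟩ | ⟨-, hAH1⟩
  · exact absurd (relIndex_eq_one.mp hHK1) hKH
  · exact le_antisymm (relIndex_eq_one.mp hAH1) hAH

theorem centralizer_inf_eq_zpowers {M : Subgroup G} {g t : G} (hg : g ∈ M)
    (ht : Commute g t) (htM : t ∉ M) (hidx : (zpowers g).relIndex (centralizer {g}) = 2) :
    centralizer {g} ⊓ M = zpowers g := by
  refine eq_of_le_of_relIndex_eq_prime Nat.prime_two ?_ inf_le_left ?_ hidx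
  · exact zpowers_le.mpr ⟨mem_centralizer_singleton_iff.mpr rfl, hg⟩
  · exact fun hle => htM (hle (mem_centralizer_singleton_iff.mpr ht.symm)).2

end Subgroup

set_option maxRecDepth 10000

namespace M11

open Equiv Subgroup

def α : Perm (Fin 11) := c[0, 1, 2, 3, 4, 5, 6, 7, 8, 9, 10]
def β : Perm (Fin 11) := c[2, 6, 10, 7] * c[3, 9, 4, 5]
def s : Perm (Fin 11) := c[0, 2, 10, 5, 6, 9, 3, 4] * c[7, 8]

theorem α_mem : α ∈ M11 := subset_closure (Set.mem_insert _ _)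

theorem β_mem : β ∈ M11 := subset_closure (Set.mem_insert_of_mem _ rfl)

theorem le_alternatingGroup : M11 ≤ alternatingGroup (Fin 11) := by
  rw [M11, closure_le]
  rintro x (rfl | rfl) <;> exact Perm.mem_alternatingGroup.mpr (by decide)

theorem s_eq_word : s = β * β * α⁻¹ * β⁻¹ * α⁻¹ * β⁻¹ * α * β := by decide

theorem s_mem : s ∈ M11 := by
  rw [s_eq_word]
  exact mul_mem (mul_mem (mul_mem (mul_mem (mul_mem (mul_mem (mul_mem β_mem β_mem)
    (inv_mem α_mem)) (inv_mem β_mem)) (inv_mem α_mem)) (inv_mem β_mem)) α_mem) β_mem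

theorem orderOf_s : orderOf s = 8 :=
  orderOf_eq_prime_pow (p := 2) (n := 2) (by decide) (by decide)

theorem cycleType_s : s.cycleType = {8, 2} := by decide

theorem card_centralizer_s : Nat.card (centralizer {s}) = 16 := by
  rw [Perm.nat_card_centralizer, cycleType_s]
  decide

theorem relIndex_zpowers_s : (zpowers s).relIndex (centralizer {s}) = 2 := by
  have h := card_mul_relIndex (K := centralizer {s})
    (zpowers_le.mpr (mem_centralizer_singleton_iff.mpr rfl))
  rw [Nat.card_zpowers, orderOf_s, card_centralizer_s] at h
  omega

theorem commute_s_swap : Commute s (swap 7 8) := by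
  unfold Commute SemiconjBy
  decide

theorem swap_notMem : swap (7 : Fin 11) 8 ∉ M11 := fun h =>
  absurd (Perm.mem_alternatingGroup.mp (le_alternatingGroup h)) (by decide)

theorem conj_s_eq_pow_three : α * β * β * α⁻¹ * s * (α * β * β * α⁻¹)⁻¹ = s ^ 3 := by decide

end M11

/-- `s = (1 3 11 6 7 10 4 5)(8 9)` has order 8, its centralizer in `M₁₁` is `⟨s⟩`,
and `s³` is conjugate to `s` in `M₁₁`. -/
theorem stmt6 :
    (c[0, 2, 10, 5, 6, 9, 3, 4] * c[7, 8] : Equiv.Perm (Fin 11)) ∈ M11 ∧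
    orderOf (c[0, 2, 10, 5, 6, 9, 3, 4] * c[7, 8] : Equiv.Perm (Fin 11)) = 8 ∧
    Subgroup.centralizer {(c[0, 2, 10, 5, 6, 9, 3, 4] * c[7, 8] : Equiv.Perm (Fin 11))} ⊓ M11 =
      Subgroup.zpowers (c[0, 2, 10, 5, 6, 9, 3, 4] * c[7, 8] : Equiv.Perm (Fin 11)) ∧
    ∃ g ∈ M11, g * (c[0, 2, 10, 5, 6, 9, 3, 4] * c[7, 8]) * g⁻¹ =
      (c[0, 2, 10, 5, 6, 9, 3, 4] * c[7, 8] : Equiv.Perm (Fin 11)) ^ 3 := by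
  open M11 in
  exact ⟨s_mem, orderOf_s,
    Subgroup.centralizer_inf_eq_zpowers s_mem commute_s_swap swap_notMem relIndex_zpowers_s,
    α * β * β * α⁻¹, mul_mem (mul_mem (mul_mem α_mem β_mem) β_mem) (inv_mem α_mem),
    conj_s_eq_pow_three⟩
end

section
/- In the Mathieu group M₁₁, the element s = (1 9 7 10 8 11 5 4 3 6 2) of order 11 is conjugate to both s³ and s⁹, and s³ ≠ s⁹. -/
/-- `s = (1 9 7 10 8 11 5 4 3 6 2)`. -/
def s2 : Equiv.Perm (Fin 11) := c[0, 8, 6, 9, 7, 10, 4, 3, 2, 5, 1]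

/-! Both `s` and a conjugator `g` with `g s g⁻¹ = s³` are short words in the generators of `M₁₁`.
Then `g²` conjugates `s` to `(s³)³ = s⁹`, and `s³ ≠ s⁹` because `s` has order 11 and
`3 ≢ 9 (mod 11)`. -/

set_option maxRecDepth 10000

theorem conj_pow_eq_pow_pow {G : Type*} [Group G] {g x : G} {k : ℕ}
    (h : g * x * g⁻¹ = x ^ k) (n : ℕ) : g ^ n * x * (g ^ n)⁻¹ = x ^ (k ^ n) := by
  induction n with
  | zero => simp
  | succ n ih =>
    calc g ^ (n + 1) * x * (g ^ (n + 1))⁻¹ = g * (g ^ n * x * (g ^ n)⁻¹) * g⁻¹ := by group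
      _ = (g * x * g⁻¹) ^ (k ^ n) := by rw [ih, conj_pow]
      _ = x ^ (k ^ (n + 1)) := by rw [h, ← pow_mul, pow_succ']

namespace M11

def a : Equiv.Perm (Fin 11) := c[0, 1, 2, 3, 4, 5, 6, 7, 8, 9, 10]

def b : Equiv.Perm (Fin 11) := c[2, 6, 10, 7] * c[3, 9, 4, 5]

theorem a_mem : a ∈ M11 :=
  Subgroup.subset_closure (Set.mem_insert _ _)

theorem b_mem : b ∈ M11 :=
  Subgroup.subset_closure (Set.mem_insert_of_mem _ rfl)

theorem s2_eq : s2 = a⁻¹ ^ 3 * b * a⁻¹ * b * a := by decide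

theorem s2_mem : s2 ∈ M11 := by
  have ha' := inv_mem a_mem
  rw [s2_eq]
  exact mul_mem (mul_mem (mul_mem (mul_mem (pow_mem ha' 3) b_mem) ha') b_mem) a_mem

theorem orderOf_s2 : orderOf s2 = 11 :=
  have : Fact (Nat.Prime 11) := ⟨by norm_num⟩
  orderOf_eq_prime (by decide) (by decide)

def conjCube : Equiv.Perm (Fin 11) := b * a⁻¹ ^ 2 * b⁻¹ * a⁻¹ * b⁻¹

theorem conjCube_mem : conjCube ∈ M11 :=
  have ha' := inv_mem a_mem
  have hb' := inv_mem b_mem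
  mul_mem (mul_mem (mul_mem (mul_mem b_mem (pow_mem ha' 2)) hb') ha') hb'

theorem conjCube_conj_s2 : conjCube * s2 * conjCube⁻¹ = s2 ^ 3 := by decide

end M11

/-- `s` has order 11, is conjugate in `M₁₁` to both `s³` and `s⁹`, and `s³ ≠ s⁹`. -/
theorem stmt10 :
    s2 ∈ M11 ∧ orderOf s2 = 11 ∧
    (∃ g ∈ M11, g * s2 * g⁻¹ = s2 ^ 3) ∧
    (∃ g ∈ M11, g * s2 * g⁻¹ = s2 ^ 9) ∧
    s2 ^ 3 ≠ s2 ^ 9 := by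
  refine ⟨M11.s2_mem, M11.orderOf_s2, ⟨_, M11.conjCube_mem, M11.conjCube_conj_s2⟩,
    ⟨_, pow_mem M11.conjCube_mem 2, conj_pow_eq_pow_pow M11.conjCube_conj_s2 2⟩, ?_⟩
  rw [Ne, pow_eq_pow_iff_modEq, M11.orderOf_s2]
  decide
end

section
/- In the Mathieu group M₁₁, let σ₀ = (1 5 8 4 6 9)(2 10 3)(7 11) (an element of order 6) and σ₁ = (1 6 8)(2 5 3 4 10 9)(7 11). Then σ₁ lies in the conjugacy class of σ₀, and setting σ₂ = σ₀ σ₁ σ₀⁻¹, the triple (σ₀, σ₁, σ₂) consists of distinct elements forming a family of type D₃ (σ_i σ_j σ_i⁻¹ = σ_{2i−j} for all i,j ∈ ℤ₃). -/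
/-!
Everything is a finite computation in `S₁₁`, checked by `decide`: `σ₀` is an explicit word in the
two generators `a, b` of `M₁₁`, and `σ₁ = g σ₀ g⁻¹` with `g = a⁴ b³ ∈ M₁₁`. Of the nine `D₃`
relations, the three with `i = j` are trivial and the two with `i = 2` are formal consequences of
the remaining four.
-/

set_option maxRecDepth 10000

def sigma0 : Equiv.Perm (Fin 11) := c[0, 4, 7, 3, 5, 8] * c[1, 9, 2] * c[6, 10]

def sigma1 : Equiv.Perm (Fin 11) := c[0, 5, 7] * c[1, 4, 2, 3, 9, 8] * c[6, 10]

def sigma2 : Equiv.Perm (Fin 11) := sigma0 * sigma1 * sigma0⁻¹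

def sigmaFam : ZMod 3 → Equiv.Perm (Fin 11) :=
  fun i => if i = 0 then sigma0 else if i = 1 then sigma1 else sigma2

/-- Conjugation by `f 2 = f 0 * f 1 * (f 0)⁻¹` permutes the family as `(12)(02)(12) = (01)`. -/
theorem conj_eq_two_mul_sub_of_swaps {G : Type*} [Group G] (f : ZMod 3 → G)
    (h01 : f 0 * f 1 * (f 0)⁻¹ = f 2) (h02 : f 0 * f 2 * (f 0)⁻¹ = f 1)
    (h10 : f 1 * f 0 * (f 1)⁻¹ = f 2) (h12 : f 1 * f 2 * (f 1)⁻¹ = f 0) :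
    ∀ i j : ZMod 3, f i * f j * (f i)⁻¹ = f (2 * i - j) := by
  have h20 : f 2 * f 0 * (f 2)⁻¹ = f 1 :=
    calc f 2 * f 0 * (f 2)⁻¹ = f 0 * (f 1 * f 0 * (f 1)⁻¹) * (f 0)⁻¹ := by rw [← h01]; group
      _ = f 1 := by rw [h10, h02]
  have h21 : f 2 * f 1 * (f 2)⁻¹ = f 0 :=
    calc f 2 * f 1 * (f 2)⁻¹ = f 0 * (f 1 * ((f 0)⁻¹ * f 1 * f 0) * (f 1)⁻¹) * (f 0)⁻¹ := by
          rw [← h01]; group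
      _ = f 0 := by rw [show (f 0)⁻¹ * f 1 * f 0 = f 2 by rw [← h02]; group, h12]; group
  intro i j
  fin_cases i <;> fin_cases j <;> first | assumption | exact mul_inv_cancel_right _ _

namespace M11

@[irreducible] def genA : Equiv.Perm (Fin 11) := c[0, 1, 2, 3, 4, 5, 6, 7, 8, 9, 10]

@[irreducible] def genB : Equiv.Perm (Fin 11) := c[2, 6, 10, 7] * c[3, 9, 4, 5]

theorem genA_mem : genA ∈ M11 := by
  unfold genA; exact Subgroup.subset_closure (Set.mem_insert _ _)

theorem genB_mem : genB ∈ M11 := by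
  unfold genB; exact Subgroup.subset_closure (Set.mem_insert_of_mem _ rfl)

end M11

open M11

theorem sigma0_eq_word :
    sigma0 = genB ^ 2 * genA * genB * genA * genB * genA * genB ^ 3 * genA := by
  unfold genA genB; decide

theorem sigma0_mem_M11 : sigma0 ∈ M11 := by
  rw [sigma0_eq_word]
  apply_rules [mul_mem, pow_mem, genA_mem, genB_mem]

theorem orderOf_sigma0 : orderOf sigma0 = 6 :=
  (orderOf_eq_iff (by norm_num)).2 ⟨by decide, by decide⟩

theorem conj_sigma0 : (genA ^ 4 * genB ^ 3) * sigma0 * (genA ^ 4 * genB ^ 3)⁻¹ = sigma1 := by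
  unfold genA genB; decide

theorem sigmaFam_injective : Function.Injective sigmaFam := by
  decide

/-- `σ₀` has order 6, `σ₁` is conjugate to `σ₀` in `M₁₁`, and `(σ₀, σ₁, σ₂)` are distinct
and form a family of type `D₃`. -/
theorem stmt15 :
    sigma0 ∈ M11 ∧ orderOf sigma0 = 6 ∧
    (∃ g ∈ M11, g * sigma0 * g⁻¹ = sigma1) ∧
    Function.Injective sigmaFam ∧
    (∀ i j : ZMod 3, sigmaFam i * sigmaFam j * (sigmaFam i)⁻¹ = sigmaFam (2 * i - j)) := by
  refine ⟨sigma0_mem_M11, orderOf_sigma0,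
    ⟨genA ^ 4 * genB ^ 3, by apply_rules [mul_mem, pow_mem, genA_mem, genB_mem], conj_sigma0⟩,
    sigmaFam_injective, ?_⟩
  apply conj_eq_two_mul_sub_of_swaps <;> decide
end

section
/- In the Mathieu group M₁₂, the element s = (1 2 7 10 5 6 8 12 9 4)(3 11) has order 10, its centralizer in M₁₂ is the cyclic group of order 10 generated by s, s is conjugate to s⁻¹, and the intersection of the conjugacy class of s with its centralizer equals {s, s³, s⁷, s⁹}. -/
/-- The Mathieu group `M₁₂ ≤ S₁₂` (points `1,…,12` encoded as `0,…,11`). -/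
def M12 : Subgroup (Equiv.Perm (Fin 12)) :=
  Subgroup.closure
    {c[0, 1, 2, 3, 4, 5, 6, 7, 8, 9, 10], c[2, 6, 10, 7] * c[3, 9, 4, 5],
     c[0, 11] * c[1, 10] * c[2, 5] * c[3, 7] * c[4, 8] * c[6, 9]}

/-- `s = (1 2 7 10 5 6 8 12 9 4)(3 11)`. -/
def s13 : Equiv.Perm (Fin 12) := c[0, 1, 6, 9, 4, 5, 7, 11, 8, 3] * c[2, 10]

/-!
A permutation commuting with `s` is determined by its values at one point of each `s`-orbit,
and it preserves the 10-cycle and the 2-cycle of `s`; hence the centralizer of `s` in `S₁₂` is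
`⟨s⟩ × ⟨(3 11)⟩`, where `(3 11)` is `swap 2 10` in the 0-based encoding. As `M₁₂ ≤ A₁₂`, `s` is
even and `(3 11)` is odd, the centralizer in `M₁₂` is `⟨s⟩`. An element of `M₁₂` conjugating `s`
to `s³` has powers conjugating `s` to `s ^ 3 ^ j`, which runs through `s, s³, s⁹, s⁷`;
conversely a conjugate of `s` in `⟨s⟩` has order 10.
-/

set_option maxRecDepth 5000

namespace Equiv.Perm

variable {α : Type*} {σ g h : Perm α}

theorem commute_pow_apply (hg : Commute g σ) (n : ℕ) (x : α) :
    g ((σ ^ n) x) = (σ ^ n) (g x) :=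
  DFunLike.congr_fun (hg.pow_right n).eq x

theorem eq_of_commute_of_eqOn {S : Set α} (hS : ∀ y, ∃ x ∈ S, ∃ n : ℕ, (σ ^ n) x = y)
    (hg : Commute g σ) (hh : Commute h σ) (hgh : Set.EqOn g h S) : g = h := by
  ext y
  obtain ⟨x, hx, n, rfl⟩ := hS y
  rw [commute_pow_apply hg, commute_pow_apply hh, hgh hx]

end Equiv.Perm

theorem conj_pow_eq_pow_pow_of_conj_eq_pow {G : Type*} [Group G] {g x : G} {a : ℕ}
    (h : g * x * g⁻¹ = x ^ a) (j : ℕ) : g ^ j * x * (g ^ j)⁻¹ = x ^ a ^ j := by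
  induction j with
  | zero => simp
  | succ j ih =>
    calc g ^ (j + 1) * x * (g ^ (j + 1))⁻¹ = g * (g ^ j * x * (g ^ j)⁻¹) * g⁻¹ := by group
      _ = (g * x * g⁻¹) ^ a ^ j := by rw [ih, conj_pow]
      _ = x ^ a ^ (j + 1) := by rw [h, ← pow_mul, pow_succ']

open Equiv Equiv.Perm

def genA : Perm (Fin 12) := c[0, 1, 2, 3, 4, 5, 6, 7, 8, 9, 10]
def genB : Perm (Fin 12) := c[2, 6, 10, 7] * c[3, 9, 4, 5]
def genC : Perm (Fin 12) := c[0, 11] * c[1, 10] * c[2, 5] * c[3, 7] * c[4, 8] * c[6, 9]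

theorem genA_mem_M12 : genA ∈ M12 := Subgroup.subset_closure (by left; rfl)
theorem genB_mem_M12 : genB ∈ M12 := Subgroup.subset_closure (by right; left; rfl)
theorem genC_mem_M12 : genC ∈ M12 := Subgroup.subset_closure (by right; right; rfl)

theorem M12_le_alternatingGroup : M12 ≤ alternatingGroup (Fin 12) := by
  refine (Subgroup.closure_le _).mpr ?_
  rintro x (rfl | rfl | rfl) <;> exact mem_alternatingGroup.mpr (by decide)

theorem swap_not_mem_M12 : swap (2 : Fin 12) 10 ∉ M12 := fun h =>
  absurd (mem_alternatingGroup.mp (M12_le_alternatingGroup h)) (by decide)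

theorem s13_mem_M12 : s13 ∈ M12 := by
  have : s13 = genB * genB * genA⁻¹ * genA⁻¹ * genA⁻¹ * genC * genA * genB * genA⁻¹ := by
    decide
  rw [this]
  simp only [Subgroup.mul_mem_cancel_right, Subgroup.inv_mem_iff, genA_mem_M12, genB_mem_M12,
    genC_mem_M12]

theorem orderOf_s13 : orderOf s13 = 10 :=
  (orderOf_eq_iff (by norm_num)).mpr ⟨by decide, by decide⟩

def cubingConj : Perm (Fin 12) := genC * genA * genB * genA * genB⁻¹ * genA * genB

theorem cubingConj_mem_M12 : cubingConj ∈ M12 := by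
  simp only [cubingConj, Subgroup.mul_mem_cancel_right, Subgroup.inv_mem_iff, genA_mem_M12,
    genB_mem_M12, genC_mem_M12]

theorem cubingConj_conj_s13 : cubingConj * s13 * cubingConj⁻¹ = s13 ^ 3 := by decide

theorem exists_pow_s13_apply_eq (y : Fin 12) :
    ∃ x ∈ ({0, 2} : Set (Fin 12)), ∃ n : ℕ, (s13 ^ n) x = y := by
  obtain ⟨n, -, h | h⟩ :=
    (by decide : ∀ y : Fin 12, ∃ n < 10, (s13 ^ n) 0 = y ∨ (s13 ^ n) 2 = y) y
  exacts [⟨0, by simp, n, h⟩, ⟨2, by simp, n, h⟩]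

theorem eq_one_or_eq_swap_of_commute_s13 {g : Perm (Fin 12)} (hg : Commute g s13)
    (h0 : g 0 = 0) : g = 1 ∨ g = swap 2 10 := by
  have hfix : (s13 ^ 2) (g 2) = g 2 := by
    rw [← commute_pow_apply hg, (by decide : (s13 ^ 2) 2 = 2)]
  rcases (by decide : ∀ y : Fin 12, (s13 ^ 2) y = y → y = 2 ∨ y = 10) _ hfix with h2 | h2
  · refine .inl (eq_of_commute_of_eqOn exists_pow_s13_apply_eq hg (.one_left _) ?_)
    simp [Set.EqOn, h0, h2]
  · have hswap : Commute (swap (2 : Fin 12) 10) s13 := by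
      show swap 2 10 * s13 = s13 * swap 2 10
      decide
    refine .inr (eq_of_commute_of_eqOn exists_pow_s13_apply_eq hg hswap ?_)
    simp [Set.EqOn, h0, h2, swap_apply_of_ne_of_ne]

theorem exists_eq_pow_or_eq_pow_mul_swap_of_commute_s13 {g : Perm (Fin 12)}
    (hg : Commute g s13) : ∃ k : ℕ, g = s13 ^ k ∨ g = s13 ^ k * swap 2 10 := by
  have hmove : (s13 ^ 2) (g 0) ≠ g 0 := by
    rw [← commute_pow_apply hg]
    exact g.injective.ne (by decide)
  obtain ⟨k, -, hk⟩ :=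
    (by decide : ∀ y : Fin 12, (s13 ^ 2) y ≠ y → ∃ k < 10, (s13 ^ k) 0 = y) _ hmove
  have hc : Commute ((s13 ^ k)⁻¹ * g) s13 := (Commute.self_pow s13 k).symm.inv_left.mul_left hg
  have h0 : ((s13 ^ k)⁻¹ * g) 0 = 0 := by simp [← hk]
  refine ⟨k, ?_⟩
  rcases eq_one_or_eq_swap_of_commute_s13 hc h0 with h | h
  · exact .inl (inv_mul_eq_one.mp h).symm
  · exact .inr (inv_mul_eq_iff_eq_mul.mp h)

theorem centralizer_s13_inf_M12 : Subgroup.centralizer {s13} ⊓ M12 = Subgroup.zpowers s13 := by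
  refine le_antisymm ?_ ?_
  · rintro g ⟨hc, hM⟩
    obtain ⟨k, rfl | rfl⟩ := exists_eq_pow_or_eq_pow_mul_swap_of_commute_s13
      (Subgroup.mem_centralizer_singleton_iff.mp hc)
    · exact Subgroup.npow_mem_zpowers s13 k
    · exact absurd ((Subgroup.mul_mem_cancel_left _ (pow_mem s13_mem_M12 k)).mp hM)
        swap_not_mem_M12
  · exact Subgroup.zpowers_le.mpr ⟨Subgroup.mem_centralizer_singleton_iff.mpr rfl, s13_mem_M12⟩

theorem exists_conj_s13_eq_pow_three_pow (j : ℕ) :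
    ∃ g ∈ M12, g * s13 * g⁻¹ = s13 ^ (3 ^ j % 10) :=
  ⟨cubingConj ^ j, pow_mem cubingConj_mem_M12 j, by
    rw [conj_pow_eq_pow_pow_of_conj_eq_pow cubingConj_conj_s13, ← orderOf_s13, pow_mod_orderOf]⟩

theorem s13_inv : s13⁻¹ = s13 ^ 9 := by
  rw [inv_eq_iff_mul_eq_one, ← pow_succ', show 9 + 1 = orderOf s13 by rw [orderOf_s13],
    pow_orderOf_eq_one]

theorem conj_s13_inter_centralizer :
    {t : Perm (Fin 12) | (∃ g ∈ M12, g * s13 * g⁻¹ = t) ∧ t ∈ Subgroup.centralizer {s13}} =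
      {s13, s13 ^ 3, s13 ^ 7, s13 ^ 9} := by
  ext t
  constructor
  · rintro ⟨⟨g, hg, rfl⟩, hc⟩
    have hmem : g * s13 * g⁻¹ ∈ Subgroup.centralizer {s13} ⊓ M12 :=
      Subgroup.mem_inf.mpr ⟨hc, mul_mem (mul_mem hg s13_mem_M12) (inv_mem hg)⟩
    rw [centralizer_s13_inf_M12, mem_zpowers_iff_mem_range_orderOf, orderOf_s13] at hmem
    obtain ⟨k, hk, hkt⟩ := Finset.mem_image.mp hmem
    have hord : orderOf (s13 ^ k) = 10 := by
      rw [hkt, ← orderOf_s13]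
      exact (SemiconjBy.orderOf_eq g (by simp [SemiconjBy])).symm
    rw [orderOf_pow, orderOf_s13] at hord
    rw [← hkt]
    have hcoprime : ∀ k < 10, 10 / Nat.gcd 10 k = 10 → k = 1 ∨ k = 3 ∨ k = 7 ∨ k = 9 := by
      decide
    rcases hcoprime k (Finset.mem_range.mp hk) hord with rfl | rfl | rfl | rfl <;> simp
  · have hcent (n : ℕ) : s13 ^ n ∈ Subgroup.centralizer {s13} :=
      Subgroup.mem_centralizer_singleton_iff.mpr (Commute.self_pow s13 n).symm
    rintro (rfl | rfl | rfl | rfl)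
    · exact ⟨by simpa using exists_conj_s13_eq_pow_three_pow 0, by simpa using hcent 1⟩
    · exact ⟨by simpa using exists_conj_s13_eq_pow_three_pow 1, hcent 3⟩
    · exact ⟨by simpa using exists_conj_s13_eq_pow_three_pow 3, hcent 7⟩
    · exact ⟨by simpa using exists_conj_s13_eq_pow_three_pow 2, hcent 9⟩

/-- `s` has order 10, its centralizer in `M₁₂` is `⟨s⟩` of order 10, `s` is conjugate
to `s⁻¹` in `M₁₂`, and `𝒪_s ∩ M₁₂^s = {s, s³, s⁷, s⁹}`. -/
theorem stmt17 :
    s13 ∈ M12 ∧ orderOf s13 = 10 ∧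
    Subgroup.centralizer {s13} ⊓ M12 = Subgroup.zpowers s13 ∧
    (∃ g ∈ M12, g * s13 * g⁻¹ = s13⁻¹) ∧
    {t : Equiv.Perm (Fin 12) | (∃ g ∈ M12, g * s13 * g⁻¹ = t) ∧
      t ∈ Subgroup.centralizer {s13}} = {s13, s13 ^ 3, s13 ^ 7, s13 ^ 9} := by
  refine ⟨s13_mem_M12, orderOf_s13, centralizer_s13_inf_M12, ?_, conj_s13_inter_centralizer⟩
  simpa [s13_inv] using exists_conj_s13_eq_pow_three_pow 2
end
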